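/- Let Φ be a reduced crystallographic root system with simple roots α_1, …, α_n, coroot lattice R^∨, coweight lattice Q^∨, and Weyl group W. Let η ∈ Q^∨ with ⟨α_i, η⟩ = 1, set ν := A_{s_i}η and b := t^η s_i ∈ W̃. Let u ∈ W and let ζ ∈ (u(ν + ℝα_i^∨)) ∩ (η + R^∨). Then: (1) there exists an integer d ∈ ℤ such that u⁻¹ζ − η = d·α_i^∨; and (2) for this d, setting y := t^{d·uη} u ∈ W̃, one has y b y⁻¹ = t^ζ (u s_i u⁻¹). -/

import Mathlib

open scoped RealInnerProductSpace

namespace ADLV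

variable {V : Type*} [NormedAddCommGroup V] [InnerProductSpace ℝ V]

/-- The coroot `α^∨ = 2α/(α,α)` of a root `α`. -/
noncomputable def coroot (α : V) : V := (2 / ⟪α, α⟫) • α

/-- The reflection `s_α : x ↦ x - ⟨α, x⟩ α^∨` in the hyperplane orthogonal to `α`,
as a linear automorphism. -/
noncomputable def sRefl (α : V) (hα : α ≠ 0) : V ≃ₗ[ℝ] V :=
  Module.reflection (f := (innerSL ℝ α : V →ₗ[ℝ] ℝ)) (x := coroot α)
    (by
      have h : ⟪α, α⟫ ≠ 0 := inner_self_ne_zero.mpr hα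
      simp [coroot, real_inner_smul_right]
      field_simp)

/-- The averaging operator `A_w = (1/m)(I + w + w² + ⋯ + w^{m-1})`. -/
noncomputable def avgProj (m : ℕ) (w : V ≃ₗ[ℝ] V) : V →ₗ[ℝ] V :=
  (m : ℝ)⁻¹ • ∑ i ∈ Finset.range m, ((w ^ i : V ≃ₗ[ℝ] V) : V →ₗ[ℝ] V)

/-- The (finite) Weyl group: the group generated by the simple reflections. -/
noncomputable def weylGroup {n : ℕ} (α : Fin n → V) (hα : ∀ j, α j ≠ 0) :
    Subgroup (V ≃ₗ[ℝ] V) :=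
  Subgroup.closure (Set.range fun j => sRefl (α j) (hα j))

/-- The coroot lattice `R^∨ = ⊕_j ℤ α_j^∨`. -/
noncomputable def corootLattice {n : ℕ} (α : Fin n → V) : AddSubgroup V :=
  AddSubgroup.closure (Set.range fun j => coroot (α j))

/-- The coweight lattice `Q^∨ = {x : ⟨α_j, x⟩ ∈ ℤ for all j}`. -/
def coweightLattice {n : ℕ} (α : Fin n → V) : Set V :=
  {x : V | ∀ j, ∃ m : ℤ, ⟪α j, x⟫ = (m : ℝ)}

/-- Elements `t^μ u` of the (extended) affine Weyl group `Q^∨ ⋊ W`, realized inside the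
semidirect product `V ⋊ GL(V)` with multiplication `(t^μ u)(t^λ v) = t^{μ + uλ}(uv)`. -/
@[ext]
structure Aff (V : Type*) [NormedAddCommGroup V] [InnerProductSpace ℝ V] where
  /-- the translation part -/
  t : V
  /-- the linear part -/
  w : V ≃ₗ[ℝ] V

namespace Aff

instance : Mul (Aff V) := ⟨fun a b => ⟨a.t + a.w b.t, a.w * b.w⟩⟩
instance : One (Aff V) := ⟨⟨0, 1⟩⟩
instance : Inv (Aff V) := ⟨fun a => ⟨-(a.w⁻¹ a.t), a.w⁻¹⟩⟩

@[simp] lemma mul_t (a b : Aff V) : (a * b).t = a.t + a.w b.t := rfl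
@[simp] lemma mul_w (a b : Aff V) : (a * b).w = a.w * b.w := rfl
@[simp] lemma one_t : (1 : Aff V).t = 0 := rfl
@[simp] lemma one_w : (1 : Aff V).w = 1 := rfl
@[simp] lemma inv_t (a : Aff V) : (a⁻¹).t = -(a.w⁻¹ a.t) := rfl
@[simp] lemma inv_w (a : Aff V) : (a⁻¹).w = a.w⁻¹ := rfl

lemma mul_apply_w (f g : V ≃ₗ[ℝ] V) (x : V) : (f * g) x = f (g x) := rfl

instance : Group (Aff V) where
  mul_assoc a b c := by
    refine Aff.ext ?_ ?_
    · simp [mul_apply_w, map_add, add_assoc]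
    · simp [mul_assoc]
  one_mul a := by refine Aff.ext ?_ ?_ <;> simp
  mul_one a := by refine Aff.ext ?_ ?_ <;> simp
  inv_mul_cancel a := by
    refine Aff.ext ?_ ?_
    · simp [mul_apply_w]
    · simp

end Aff

/-!
Both `η` and `ζ ∈ η + R^∨` lie in `Q^∨`, on which `W` acts trivially modulo `R^∨` (a simple
reflection moves `x` by `⟨α_j, x⟩ α_j^∨`), so `u⁻¹ζ - η ∈ R^∨`. On the other hand
`u⁻¹ζ ∈ ν + ℝα_i^∨ = η + ℝα_i^∨`, and the linear independence of the simple coroots makes the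
coefficient of `α_i^∨` an integer `d`. The conjugation identity is then a computation in
`V ⋊ GL(V)` using `s_i η = η - α_i^∨`.
-/

lemma sRefl_apply (α : V) (hα : α ≠ 0) (x : V) :
    sRefl α hα x = x - ⟪α, x⟫ • coroot α := by
  simp [sRefl, Module.reflection_apply]

lemma sRefl_inv (α : V) (hα : α ≠ 0) : (sRefl α hα)⁻¹ = sRefl α hα :=
  Module.reflection_symm _

lemma avgProj_two_apply (w : V ≃ₗ[ℝ] V) (x : V) :
    avgProj 2 w x = (2⁻¹ : ℝ) • (x + w x) := by
  simp [avgProj, Finset.sum_range_succ]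

section Lattices

variable {n : ℕ} (α : Fin n → V)

lemma coroot_mem_corootLattice (j : Fin n) : coroot (α j) ∈ corootLattice α :=
  AddSubgroup.subset_closure ⟨j, rfl⟩

lemma intCast_smul_coroot_mem_corootLattice (m : ℤ) (j : Fin n) :
    (m : ℝ) • coroot (α j) ∈ corootLattice α := by
  rw [Int.cast_smul_eq_zsmul]
  exact zsmul_mem (coroot_mem_corootLattice α j) m

lemma add_mem_coweightLattice {x y : V} (hx : x ∈ coweightLattice α)
    (hy : y ∈ coweightLattice α) : x + y ∈ coweightLattice α := fun j => by
  obtain ⟨a, ha⟩ := hx j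
  obtain ⟨b, hb⟩ := hy j
  exact ⟨a + b, by rw [inner_add_right, ha, hb, Int.cast_add]⟩

lemma corootLattice_subset_coweightLattice
    (hcart : ∀ k j, ∃ m : ℤ, ⟪α k, coroot (α j)⟫ = (m : ℝ)) :
    (corootLattice α : Set V) ⊆ coweightLattice α := by
  intro x hx
  induction hx using AddSubgroup.closure_induction with
  | mem y hy =>
    obtain ⟨j, rfl⟩ := hy
    exact fun k => hcart k j
  | zero => exact fun k => ⟨0, by simp⟩
  | add y z _ _ hy hz => exact add_mem_coweightLattice α hy hz
  | neg y _ hy =>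
    intro k
    obtain ⟨m, hm⟩ := hy k
    exact ⟨-m, by rw [inner_neg_right, hm, Int.cast_neg]⟩

lemma sRefl_sub_self_mem_corootLattice (hα : ∀ j, α j ≠ 0) (j : Fin n) {x : V}
    (hx : x ∈ coweightLattice α) : sRefl (α j) (hα j) x - x ∈ corootLattice α := by
  obtain ⟨m, hm⟩ := hx j
  rw [sRefl_apply, hm, sub_sub_cancel_left, ← neg_smul, ← Int.cast_neg]
  exact intCast_smul_coroot_mem_corootLattice α (-m) j

lemma weylGroup_sub_self_mem_corootLattice (hα : ∀ j, α j ≠ 0)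
    (hcart : ∀ k j, ∃ m : ℤ, ⟪α k, coroot (α j)⟫ = (m : ℝ))
    {w : V ≃ₗ[ℝ] V} (hw : w ∈ weylGroup α hα) {x : V} (hx : x ∈ coweightLattice α) :
    w x - x ∈ corootLattice α := by
  induction hw using Subgroup.closure_induction'' generalizing x with
  | mem s hs =>
    obtain ⟨j, rfl⟩ := hs
    exact sRefl_sub_self_mem_corootLattice α hα j hx
  | inv_mem s hs =>
    obtain ⟨j, rfl⟩ := hs
    rw [sRefl_inv]
    exact sRefl_sub_self_mem_corootLattice α hα j hx
  | one => simp
  | mul a b _ _ ha hb =>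
    have hbx : b x ∈ coweightLattice α := by
      simpa using add_mem_coweightLattice α hx
        (corootLattice_subset_coweightLattice α hcart (hb hx))
    simpa [Aff.mul_apply_w] using add_mem (ha hbx) (hb hx)

lemma linearIndependent_coroot (hα : ∀ j, α j ≠ 0) (hlin : LinearIndependent ℝ α) :
    LinearIndependent ℝ (fun j => coroot (α j)) := by
  have hc : ∀ j, (2 / ⟪α j, α j⟫ : ℝ) ≠ 0 := fun j =>
    div_ne_zero two_ne_zero (inner_self_ne_zero.mpr (hα j))
  exact hlin.units_smul (fun j => Units.mk0 _ (hc j))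

lemma exists_int_of_smul_coroot_mem_corootLattice
    (hli : LinearIndependent ℝ (fun j => coroot (α j))) {r : ℝ} {i : Fin n}
    (hr : r • coroot (α i) ∈ corootLattice α) : ∃ d : ℤ, r = d := by
  rw [corootLattice, ← Submodule.span_int_eq_addSubgroupClosure,
    Submodule.mem_toAddSubgroup, Submodule.mem_span_range_iff_exists_fun] at hr
  obtain ⟨c, hc⟩ := hr
  refine ⟨c i, ?_⟩
  have := Fintype.linearIndependent_iffₛ.mp hli (Pi.single i r) (fun j => (c j : ℝ)) ?_ i
  · simpa using this
  · simp_rw [← Int.cast_smul_eq_zsmul ℝ] at hc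
    simp [hc]

end Lattices

lemma Aff.mk_mul_mk_mul_mk_inv (μ η : V) (u s : V ≃ₗ[ℝ] V) :
    Aff.mk μ u * Aff.mk η s * (Aff.mk μ u)⁻¹
      = Aff.mk (μ + u η - (u * s * u⁻¹) μ) (u * s * u⁻¹) := by
  ext1 <;> simp [sub_eq_add_neg]

/-- Let `η ∈ Q^∨` with `⟨α_i, η⟩ = 1`, set `ν := A_{s_i} η` and
`b := t^η s_i ∈ W̃`.  Let `u ∈ W` and `ζ ∈ (u (ν + ℝα_i^∨)) ∩ (η + R^∨)`.  Then:
(1) there is an integer `d ∈ ℤ` with `u⁻¹ ζ - η = d • α_i^∨`; and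
(2) for this `d`, setting `y := t^{d • uη} u ∈ W̃`, one has `y b y⁻¹ = t^ζ (u s_i u⁻¹)`. -/
theorem inverse_problem_rank_one {n : ℕ}
    (α : Fin n → V) (hα : ∀ j, α j ≠ 0)
    (hlin : LinearIndependent ℝ α)
    -- crystallographic: the Cartan integers `⟨α_k, α_j^∨⟩` are integers
    (hcart : ∀ k j, ∃ m : ℤ, ⟪α k, coroot (α j)⟫ = (m : ℝ))
    (i : Fin n)
    (η : V) (hη : η ∈ coweightLattice α) (hηi : ⟪α i, η⟫ = 1)
    (u : V ≃ₗ[ℝ] V) (huW : u ∈ weylGroup α hα)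
    (ζ : V)
    (hζT : ζ ∈ ⇑u '' {x : V | ∃ r : ℝ,
        x = avgProj 2 (sRefl (α i) (hα i)) η + r • coroot (α i)})
    (hζR : ζ - η ∈ corootLattice α) :
    (∃ d : ℤ, u⁻¹ ζ - η = (d : ℝ) • coroot (α i)) ∧
    (∀ d : ℤ, u⁻¹ ζ - η = (d : ℝ) • coroot (α i) →
      Aff.mk ((d : ℝ) • (u η)) u * Aff.mk η (sRefl (α i) (hα i))
          * (Aff.mk ((d : ℝ) • (u η)) u)⁻¹
        = Aff.mk ζ (u * sRefl (α i) (hα i) * u⁻¹)) := by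
  have hsη : sRefl (α i) (hα i) η = η - coroot (α i) := by
    rw [sRefl_apply, hηi, one_smul]
  have huζ : u (u⁻¹ ζ) = ζ := u.apply_symm_apply ζ
  refine ⟨?_, fun d hd => ?_⟩
  · obtain ⟨x, ⟨r, hx⟩, rfl⟩ := hζT
    have hline : u⁻¹ (u x) - η = (r - 2⁻¹) • coroot (α i) := by
      rw [show u⁻¹ (u x) = x from u.symm_apply_apply x, hx, avgProj_two_apply, hsη]
      module
    have hζQ : u x ∈ coweightLattice α := by
      simpa using add_mem_coweightLattice α hη
        (corootLattice_subset_coweightLattice α hcart hζR)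
    have hlat : u⁻¹ (u x) - η ∈ corootLattice α := by
      simpa using add_mem
        (weylGroup_sub_self_mem_corootLattice α hα hcart (inv_mem huW) hζQ) hζR
    rw [hline] at hlat ⊢
    obtain ⟨d, hd⟩ := exists_int_of_smul_coroot_mem_corootLattice α
      (linearIndependent_coroot α hα hlin) hlat
    exact ⟨d, by rw [hd]⟩
  · rw [Aff.mk_mul_mk_mul_mk_inv, ← huζ, eq_add_of_sub_eq' hd]
    congr 1
    simp only [map_smul, LinearEquiv.mul_apply, LinearEquiv.coe_inv,
      LinearEquiv.symm_apply_apply, hsη, map_sub, map_add]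
    module

end ADLV
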